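/- Exact value theorem: with the setup of the general formalism, suppose {1,…,m} = A ⊔ B is a partition of the parties into two nonempty sets such that 𝒢_Φ(A) = 𝒢_Φ(B) = 𝒢_Φ. Then the geometric entanglement of Ψ is exactly E_G(Ψ) = n·log₂|G| − log₂|𝒢_Φ|. -/

import Mathlib

open scoped BigOperators
open scoped Classical

noncomputable section

namespace GenForm

variable {G : Type} [Group G] [Fintype G] {n m : ℕ}
  {ι : Fin m → Type} [∀ k, Fintype (ι k)] [∀ k, DecidableEq (ι k)]

/-- `O` assigns to every party `k` a unitary representation of 𝒢 = G^{×n} on the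
(concretely modelled) finite-dimensional Hilbert space H_k = (ι k → ℂ). -/
def IsLocalRep (O : (k : Fin m) → (Fin n → G) → Matrix (ι k) (ι k) ℂ) : Prop :=
  ∀ k : Fin m,
    (∀ t, O k t ∈ Matrix.unitaryGroup (ι k) ℂ) ∧
    O k 1 = 1 ∧
    ∀ t u, O k (t * u) = O k t * O k u

/-- The product vector Φ = φ₁ ⊗ ⋯ ⊗ φ_m, as an amplitude function. -/
def prodVec (φ : (k : Fin m) → ι k → ℂ) : ((k : Fin m) → ι k) → ℂ :=
  fun x => ∏ k, φ k (x k)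

/-- The vector O^t Φ = ⊗_k O_k^t φ_k. -/
def actVec (O : (k : Fin m) → (Fin n → G) → Matrix (ι k) (ι k) ℂ)
    (φ : (k : Fin m) → ι k → ℂ) (t : Fin n → G) : ((k : Fin m) → ι k) → ℂ :=
  fun x => ∏ k, ((O k t).mulVec (φ k)) (x k)

/-- The vector O_X^t Φ, where the truncated operator acts as O_k^t for k ∈ X and as
the identity elsewhere. -/
def actVecOn (O : (k : Fin m) → (Fin n → G) → Matrix (ι k) (ι k) ℂ)
    (φ : (k : Fin m) → ι k → ℂ) (X : Finset (Fin m)) (t : Fin n → G) :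
    ((k : Fin m) → ι k) → ℂ :=
  fun x => ∏ k, if k ∈ X then ((O k t).mulVec (φ k)) (x k) else φ k (x k)

/-- Each local vector O_k^t φ_k and O_k^u φ_k is either equal or orthogonal. -/
def OrthCond (O : (k : Fin m) → (Fin n → G) → Matrix (ι k) (ι k) ℂ)
    (φ : (k : Fin m) → ι k → ℂ) : Prop :=
  ∀ (k : Fin m) (t u : Fin n → G),
    (O k t).mulVec (φ k) = (O k u).mulVec (φ k) ∨
    ∑ x : ι k, (starRingEnd ℂ) (((O k t).mulVec (φ k)) x) * ((O k u).mulVec (φ k)) x = 0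

/-- The global stabiliser 𝒢_Φ = { t : O^t Φ = Φ }. -/
def globalStab (O : (k : Fin m) → (Fin n → G) → Matrix (ι k) (ι k) ℂ)
    (φ : (k : Fin m) → ι k → ℂ) : Set (Fin n → G) :=
  { t | actVec O φ t = prodVec φ }

/-- The local stabiliser 𝒢_Φ(X) = { t : O_X^t Φ = Φ }. -/
def localStab (O : (k : Fin m) → (Fin n → G) → Matrix (ι k) (ι k) ℂ)
    (φ : (k : Fin m) → ι k → ℂ) (X : Finset (Fin m)) : Set (Fin n → G) :=
  { t | actVecOn O φ X t = prodVec φ }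

/-- The symmetrized state Ψ = (|𝒢|·|𝒢_Φ|)^{-1/2} ∑_{t∈𝒢} O^t Φ. -/
def Psi (O : (k : Fin m) → (Fin n → G) → Matrix (ι k) (ι k) ℂ)
    (φ : (k : Fin m) → ι k → ℂ) : ((k : Fin m) → ι k) → ℂ :=
  fun x => (((Real.sqrt ((Fintype.card G) ^ n * Nat.card (globalStab O φ)))⁻¹ : ℝ) : ℂ) *
    ∑ t : Fin n → G, actVec O φ t x

/-- A product state of the m parties. -/
def IsProd (Φ : ((k : Fin m) → ι k) → ℂ) : Prop :=
  ∃ χ : (k : Fin m) → ι k → ℂ,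
    (∀ k, ∑ x : ι k, ‖χ k x‖ ^ 2 = 1) ∧
    ∀ x, Φ x = ∏ k, χ k (x k)

/-- Maximal overlap with product states of the parties. -/
def LMax (ψ : ((k : Fin m) → ι k) → ℂ) : ℝ :=
  sSup { r : ℝ | ∃ Φ, IsProd Φ ∧
    r = ‖∑ x : (k : Fin m) → ι k, (starRingEnd ℂ) (Φ x) * ψ x‖ }

/-- Geometric entanglement. -/
def EG (ψ : ((k : Fin m) → ι k) → ℂ) : ℝ :=
  - Real.logb 2 (LMax ψ ^ 2)

end GenForm

/-!
For a product state `χ` write `c_k(t) = ⟨χ_k, O_k^t φ_k⟩`, so that `⟨χ, O^t Φ⟩ = a(t) b(t)` with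
`a(t) = ∏_{k ∈ A} c_k(t)` and `b(t) = ∏_{k ∈ B} c_k(t)`. By the orthogonality condition the vectors
`O_A^t Φ` are orthonormal up to repetition, and `O_A^t Φ = O_A^u Φ` exactly when
`u⁻¹ t ∈ 𝒢_Φ(A) = 𝒢_Φ`, so each of them occurs `|𝒢_Φ|` times. Bessel's inequality therefore gives
`∑_t |a(t)|² ≤ |𝒢_Φ|`, likewise for `b`, and Cauchy–Schwarz gives `|∑_t a(t) b(t)| ≤ |𝒢_Φ|`. Hence
`Λ_max(Ψ) ≤ |𝒢_Φ| / √(|𝒢| |𝒢_Φ|)`, with equality at `χ = Φ` because `⟨Φ, O^t Φ⟩` is the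
indicator of `𝒢_Φ`.
-/

namespace GenForm

open Matrix Finset
open scoped Pointwise

theorem star_dotProduct_self_eq_one {𝕜 α : Type*} [RCLike 𝕜] [Fintype α] {v : α → 𝕜}
    (hv : ∑ x, ‖v x‖ ^ 2 = 1) : star v ⬝ᵥ v = 1 := by
  simp only [dotProduct, Pi.star_apply, RCLike.star_def, RCLike.conj_mul]
  exact_mod_cast hv

theorem star_mulVec_dotProduct_mulVec {α R : Type*} [Fintype α] [DecidableEq α] [CommRing R]
    [StarRing R] {U : Matrix α α R} (hU : U ∈ unitaryGroup α R) (v w : α → R) :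
    star (U *ᵥ v) ⬝ᵥ (U *ᵥ w) = star v ⬝ᵥ w := by
  rw [star_mulVec, dotProduct_mulVec, vecMul_vecMul, ← star_eq_conjTranspose,
    mem_unitaryGroup_iff'.mp hU, vecMul_one]

theorem star_prod_dotProduct_prod {κ R : Type*} [Fintype κ] [DecidableEq κ] {α : κ → Type*}
    [∀ k, Fintype (α k)] [CommSemiring R] [StarRing R] (f g : ∀ k, α k → R) :
    star (fun x : ∀ k, α k => ∏ k, f k (x k)) ⬝ᵥ (fun x => ∏ k, g k (x k)) =
      ∏ k, star (f k) ⬝ᵥ g k := by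
  simp only [dotProduct, Pi.star_apply, star_prod, ← prod_mul_distrib]
  exact (Fintype.prod_sum fun k y => star (f k y) * g k y).symm

theorem inner_toLp_toLp_eq_star_dotProduct {𝕜 α : Type*} [RCLike 𝕜] [Fintype α] (f g : α → 𝕜) :
    inner 𝕜 (WithLp.toLp 2 f : EuclideanSpace 𝕜 α) (WithLp.toLp 2 g) = star f ⬝ᵥ g := by
  rw [EuclideanSpace.inner_toLp_toLp, dotProduct_comm]

theorem norm_toLp_eq_one {𝕜 α : Type*} [RCLike 𝕜] [Fintype α] {f : α → 𝕜}
    (hf : star f ⬝ᵥ f = 1) : ‖(WithLp.toLp 2 f : EuclideanSpace 𝕜 α)‖ = 1 := by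
  have h : ‖(WithLp.toLp 2 f : EuclideanSpace 𝕜 α)‖ ^ 2 = 1 := by
    rw [@norm_sq_eq_re_inner 𝕜, inner_toLp_toLp_eq_star_dotProduct, hf, RCLike.one_re]
  exact (pow_eq_one_iff_of_nonneg (norm_nonneg _) two_ne_zero).mp h

theorem sum_norm_inner_sq_le_of_eq_or_orthogonal {𝕜 E ι : Type*} [RCLike 𝕜]
    [NormedAddCommGroup E] [InnerProductSpace 𝕜 E] [Fintype ι] [DecidableEq E]
    (v : ι → E) (hnorm : ∀ i, ‖v i‖ = 1) (horth : ∀ i j, v i ≠ v j → inner 𝕜 (v i) (v j) = 0)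
    {N : ℕ} (hN : ∀ i, #{j | v j = v i} = N) (x : E) :
    ∑ i, ‖inner 𝕜 x (v i)‖ ^ 2 ≤ N * ‖x‖ ^ 2 := by
  have hon : Orthonormal 𝕜 (Subtype.val : univ.image v → E) := by
    rw [orthonormal_iff_ite]
    rintro ⟨_, hi⟩ ⟨_, hj⟩
    obtain ⟨i, -, rfl⟩ := mem_image.mp hi
    obtain ⟨j, -, rfl⟩ := mem_image.mp hj
    by_cases h : v i = v j
    · simp [h, inner_self_eq_norm_sq_to_K, hnorm]
    · simp [h, horth i j h]
  calc ∑ i, ‖inner 𝕜 x (v i)‖ ^ 2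
      = ∑ w ∈ univ.image v, #{j | v j = w} • ‖inner 𝕜 w x‖ ^ 2 := by
        simp_rw [norm_inner_symm x]
        exact sum_comp (fun w => ‖inner 𝕜 w x‖ ^ 2) v
    _ = N * ∑ w : univ.image v, ‖inner 𝕜 (w : E) x‖ ^ 2 := by
        rw [sum_coe_sort (univ.image v) (fun w => ‖inner 𝕜 w x‖ ^ 2), mul_sum]
        refine sum_congr rfl fun w hw => ?_
        obtain ⟨i, -, rfl⟩ := mem_image.mp hw
        rw [hN, nsmul_eq_mul]
    _ ≤ N * ‖x‖ ^ 2 := by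
        gcongr
        exact hon.sum_inner_products_le x

theorem norm_sum_mul_le_of_sum_norm_sq_le {ι R : Type*} [SeminormedRing R] (s : Finset ι)
    (a b : ι → R) {N : ℝ} (ha : ∑ i ∈ s, ‖a i‖ ^ 2 ≤ N) (hb : ∑ i ∈ s, ‖b i‖ ^ 2 ≤ N) :
    ‖∑ i ∈ s, a i * b i‖ ≤ N := by
  have hN : 0 ≤ N := (sum_nonneg fun i _ => by positivity).trans ha
  calc ‖∑ i ∈ s, a i * b i‖
      ≤ ∑ i ∈ s, ‖a i‖ * ‖b i‖ := (norm_sum_le _ _).trans (sum_le_sum fun i _ => norm_mul_le _ _)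
    _ ≤ √(∑ i ∈ s, ‖a i‖ ^ 2) * √(∑ i ∈ s, ‖b i‖ ^ 2) := Real.sum_mul_le_sqrt_mul_sqrt _ _ _
    _ ≤ √N * √N := by gcongr
    _ = N := Real.mul_self_sqrt hN

section ProductVectors

variable {G : Type} {n m : ℕ} {ι : Fin m → Type} [∀ k, Fintype (ι k)]
  {O : (k : Fin m) → (Fin n → G) → Matrix (ι k) (ι k) ℂ} {φ : (k : Fin m) → ι k → ℂ}

def localVec (O : (k : Fin m) → (Fin n → G) → Matrix (ι k) (ι k) ℂ)
    (φ : (k : Fin m) → ι k → ℂ) (k : Fin m) (t : Fin n → G) : ι k → ℂ :=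
  O k t *ᵥ φ k

theorem actVec_eq_prodVec (t : Fin n → G) :
    actVec O φ t = prodVec (localVec O φ · t) := rfl

theorem actVecOn_eq_prodVec (X : Finset (Fin m)) (t : Fin n → G) :
    actVecOn O φ X t = prodVec (X.piecewise (localVec O φ · t) φ) := by
  funext x
  simp only [actVecOn, prodVec, Finset.piecewise, localVec, ite_apply]

theorem actVecOn_univ (t : Fin n → G) : actVecOn O φ univ t = actVec O φ t := by
  simp [actVecOn_eq_prodVec, actVec_eq_prodVec]

theorem star_prodVec_dotProduct_prodVec (f g : (k : Fin m) → ι k → ℂ) :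
    star (prodVec f) ⬝ᵥ prodVec g = ∏ k, star (f k) ⬝ᵥ g k :=
  star_prod_dotProduct_prod f g

theorem star_prodVec_piecewise_dotProduct_actVecOn (hφ : ∀ k, star (φ k) ⬝ᵥ φ k = 1)
    (χ : (k : Fin m) → ι k → ℂ) (X : Finset (Fin m)) (t : Fin n → G) :
    star (prodVec (X.piecewise χ φ)) ⬝ᵥ actVecOn O φ X t =
      ∏ k ∈ X, star (χ k) ⬝ᵥ localVec O φ k t := by
  rw [actVecOn_eq_prodVec, star_prodVec_dotProduct_prodVec, ← Fintype.prod_ite_mem X]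
  refine prod_congr rfl fun k _ => ?_
  by_cases hk : k ∈ X <;> simp [hk, hφ k]

theorem star_prodVec_dotProduct_actVec_eq_mul (hφ : ∀ k, star (φ k) ⬝ᵥ φ k = 1)
    (χ : (k : Fin m) → ι k → ℂ) (X : Finset (Fin m)) (t : Fin n → G) :
    star (prodVec χ) ⬝ᵥ actVec O φ t =
      (star (prodVec (X.piecewise χ φ)) ⬝ᵥ actVecOn O φ X t) *
        (star (prodVec (Xᶜ.piecewise χ φ)) ⬝ᵥ actVecOn O φ Xᶜ t) := by
  rw [star_prodVec_piecewise_dotProduct_actVecOn hφ, star_prodVec_piecewise_dotProduct_actVecOn hφ,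
    prod_mul_prod_compl, actVec_eq_prodVec, star_prodVec_dotProduct_prodVec]

variable [Group G] [∀ k, DecidableEq (ι k)]

theorem localVec_one (hO : IsLocalRep O) (k : Fin m) : localVec O φ k 1 = φ k := by
  rw [localVec, (hO k).2.1, one_mulVec]

theorem localVec_mul (hO : IsLocalRep O) (k : Fin m) (t u : Fin n → G) :
    localVec O φ k (t * u) = O k t *ᵥ localVec O φ k u := by
  rw [localVec, localVec, (hO k).2.2, mulVec_mulVec]

theorem localVec_eq_localVec_iff (hO : IsLocalRep O) (k : Fin m) (t u : Fin n → G) :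
    localVec O φ k t = localVec O φ k u ↔ localVec O φ k (u⁻¹ * t) = φ k := by
  have hinj : Function.Injective (O k u *ᵥ ·) := by
    refine Function.LeftInverse.injective (g := (O k u⁻¹ *ᵥ ·)) fun v => ?_
    change O k u⁻¹ *ᵥ (O k u *ᵥ v) = v
    rw [mulVec_mulVec, ← (hO k).2.2, inv_mul_cancel, (hO k).2.1, one_mulVec]
  have ht : localVec O φ k t = O k u *ᵥ localVec O φ k (u⁻¹ * t) := by
    rw [← localVec_mul hO, mul_inv_cancel_left]
  rw [ht]
  exact hinj.eq_iff

theorem star_localVec_dotProduct_localVec (hO : IsLocalRep O)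
    (hφ : ∀ k, star (φ k) ⬝ᵥ φ k = 1) (horth : OrthCond O φ) (k : Fin m) (t u : Fin n → G) :
    star (localVec O φ k t) ⬝ᵥ localVec O φ k u =
      if localVec O φ k t = localVec O φ k u then 1 else 0 := by
  split_ifs with h
  · rw [h, localVec, star_mulVec_dotProduct_mulVec ((hO k).1 u), hφ k]
  · exact (horth k t u).resolve_left h

theorem actVecOn_one (hO : IsLocalRep O) (X : Finset (Fin m)) :
    actVecOn O φ X 1 = prodVec φ := by
  rw [actVecOn_eq_prodVec]
  congr 1
  funext k
  by_cases hk : k ∈ X <;> simp [hk, localVec_one hO]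

theorem star_actVecOn_dotProduct_actVecOn (hO : IsLocalRep O)
    (hφ : ∀ k, star (φ k) ⬝ᵥ φ k = 1) (horth : OrthCond O φ) (X : Finset (Fin m))
    (t u : Fin n → G) :
    star (actVecOn O φ X t) ⬝ᵥ actVecOn O φ X u =
      if ∀ k ∈ X, localVec O φ k t = localVec O φ k u then 1 else 0 := by
  rw [actVecOn_eq_prodVec X t, star_prodVec_piecewise_dotProduct_actVecOn hφ,
    prod_congr rfl fun k _ => star_localVec_dotProduct_localVec hO hφ horth k t u, prod_boole]
  congr 1

theorem actVecOn_eq_actVecOn_iff (hO : IsLocalRep O) (hφ : ∀ k, star (φ k) ⬝ᵥ φ k = 1)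
    (horth : OrthCond O φ) (X : Finset (Fin m)) (t u : Fin n → G) :
    actVecOn O φ X t = actVecOn O φ X u ↔ ∀ k ∈ X, localVec O φ k t = localVec O φ k u := by
  refine ⟨fun h => ?_, fun h => ?_⟩
  · have hinner := star_actVecOn_dotProduct_actVecOn hO hφ horth X t u
    rw [← h, star_actVecOn_dotProduct_actVecOn hO hφ horth, if_pos fun _ _ => rfl] at hinner
    by_contra hne
    rw [if_neg hne] at hinner
    exact one_ne_zero hinner
  · rw [actVecOn_eq_prodVec, actVecOn_eq_prodVec]
    congr 1
    funext k
    by_cases hk : k ∈ X <;> simp [hk, h k]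

theorem star_actVecOn_dotProduct_actVecOn_eq_ite (hO : IsLocalRep O)
    (hφ : ∀ k, star (φ k) ⬝ᵥ φ k = 1) (horth : OrthCond O φ) (X : Finset (Fin m))
    (t u : Fin n → G) :
    star (actVecOn O φ X t) ⬝ᵥ actVecOn O φ X u =
      if actVecOn O φ X t = actVecOn O φ X u then 1 else 0 := by
  rw [star_actVecOn_dotProduct_actVecOn hO hφ horth]
  exact if_congr (actVecOn_eq_actVecOn_iff hO hφ horth X t u).symm rfl rfl

theorem actVecOn_eq_actVecOn_iff_inv_mul_mem (hO : IsLocalRep O)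
    (hφ : ∀ k, star (φ k) ⬝ᵥ φ k = 1) (horth : OrthCond O φ) (X : Finset (Fin m))
    (t u : Fin n → G) :
    actVecOn O φ X t = actVecOn O φ X u ↔ u⁻¹ * t ∈ localStab O φ X := by
  change _ ↔ actVecOn O φ X (u⁻¹ * t) = prodVec φ
  rw [← actVecOn_one hO X, actVecOn_eq_actVecOn_iff hO hφ horth,
    actVecOn_eq_actVecOn_iff hO hφ horth]
  simp only [localVec_one hO, localVec_eq_localVec_iff hO]

variable [Fintype G]

theorem card_filter_actVecOn_eq (hO : IsLocalRep O)
    (hφ : ∀ k, star (φ k) ⬝ᵥ φ k = 1) (horth : OrthCond O φ) (X : Finset (Fin m))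
    (t : Fin n → G) :
    #{u | actVecOn O φ X u = actVecOn O φ X t} = Nat.card (localStab O φ X) := by
  calc #{u | actVecOn O φ X u = actVecOn O φ X t}
      = Nat.card {u // actVecOn O φ X u = actVecOn O φ X t} := by
        rw [Nat.card_eq_fintype_card, Fintype.card_subtype]
    _ = Nat.card ↥(t • localStab O φ X) := Nat.card_congr <| Equiv.subtypeEquivRight fun u => by
        rw [Set.mem_smul_set_iff_inv_smul_mem, smul_eq_mul,
          actVecOn_eq_actVecOn_iff_inv_mul_mem hO hφ horth]
    _ = Nat.card (localStab O φ X) := Set.natCard_smul_set t _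

theorem sum_norm_sq_star_prodVec_piecewise_dotProduct_actVecOn_le
    (hO : IsLocalRep O) (hφ : ∀ k, star (φ k) ⬝ᵥ φ k = 1) (horth : OrthCond O φ)
    {χ : (k : Fin m) → ι k → ℂ} (hχ : ∀ k, star (χ k) ⬝ᵥ χ k = 1) (X : Finset (Fin m)) :
    ∑ t, ‖star (prodVec (X.piecewise χ φ)) ⬝ᵥ actVecOn O φ X t‖ ^ 2 ≤
      Nat.card (localStab O φ X) := by
  let v : (Fin n → G) → EuclideanSpace ℂ ((k : Fin m) → ι k) :=
    fun t => WithLp.toLp 2 (actVecOn O φ X t)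
  have hv_eq : ∀ t u, v t = v u ↔ actVecOn O φ X t = actVecOn O φ X u :=
    fun t u => (WithLp.toLp_injective 2).eq_iff
  have hnorm : ∀ t, ‖v t‖ = 1 := fun t => norm_toLp_eq_one <| by
    rw [star_actVecOn_dotProduct_actVecOn_eq_ite hO hφ horth, if_pos rfl]
  have horthv : ∀ t u, v t ≠ v u → inner ℂ (v t) (v u) = 0 := fun t u h => by
    rw [inner_toLp_toLp_eq_star_dotProduct, star_actVecOn_dotProduct_actVecOn_eq_ite hO hφ horth,
      if_neg ((hv_eq t u).not.mp h)]
  have hfiber : ∀ t, #{u | v u = v t} = Nat.card (localStab O φ X) := fun t => by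
    simp only [hv_eq]
    exact card_filter_actVecOn_eq hO hφ horth X t
  have hχX : ‖(WithLp.toLp 2 (prodVec (X.piecewise χ φ)) : EuclideanSpace ℂ _)‖ = 1 := by
    refine norm_toLp_eq_one ?_
    rw [star_prodVec_dotProduct_prodVec]
    refine prod_eq_one fun k _ => ?_
    by_cases hk : k ∈ X <;> simp [hk, hχ k, hφ k]
  simpa [v, hχX, inner_toLp_toLp_eq_star_dotProduct] using
    sum_norm_inner_sq_le_of_eq_or_orthogonal v hnorm horthv hfiber
      (WithLp.toLp 2 (prodVec (X.piecewise χ φ)))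

end ProductVectors

section Symmetrized

variable {G : Type} [Fintype G] {n m : ℕ} {ι : Fin m → Type} [∀ k, Fintype (ι k)]
  {O : (k : Fin m) → (Fin n → G) → Matrix (ι k) (ι k) ℂ} {φ : (k : Fin m) → ι k → ℂ}

def psiScale (O : (k : Fin m) → (Fin n → G) → Matrix (ι k) (ι k) ℂ)
    (φ : (k : Fin m) → ι k → ℂ) : ℝ :=
  (Real.sqrt ((Fintype.card G) ^ n * Nat.card (globalStab O φ)))⁻¹

theorem star_dotProduct_Psi (Φ : ((k : Fin m) → ι k) → ℂ) :
    star Φ ⬝ᵥ Psi O φ = psiScale O φ * ∑ t, star Φ ⬝ᵥ actVec O φ t := by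
  simp only [dotProduct, Psi, psiScale, mul_sum]
  rw [sum_comm]
  simp only [mul_left_comm]

theorem psiScale_nonneg : 0 ≤ psiScale O φ := inv_nonneg.mpr (Real.sqrt_nonneg _)

theorem psiScale_mul_card_sq :
    (psiScale O φ * Nat.card (globalStab O φ)) ^ 2 =
      Nat.card (globalStab O φ) / (Fintype.card G : ℝ) ^ n := by
  rw [psiScale, mul_pow, inv_pow, Real.sq_sqrt (by positivity)]
  generalize (Nat.card (globalStab O φ) : ℝ) = c
  rcases eq_or_ne c 0 with rfl | hc
  · simp
  · field_simp

variable [Group G] [∀ k, DecidableEq (ι k)]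

theorem norm_star_prodVec_dotProduct_Psi_le (hO : IsLocalRep O)
    (hφ : ∀ k, star (φ k) ⬝ᵥ φ k = 1) (horth : OrthCond O φ) (A : Finset (Fin m))
    (hstabA : localStab O φ A = globalStab O φ) (hstabB : localStab O φ Aᶜ = globalStab O φ)
    {χ : (k : Fin m) → ι k → ℂ} (hχ : ∀ k, star (χ k) ⬝ᵥ χ k = 1) :
    ‖star (prodVec χ) ⬝ᵥ Psi O φ‖ ≤ psiScale O φ * Nat.card (globalStab O φ) := by
  rw [star_dotProduct_Psi, norm_mul, Complex.norm_real, Real.norm_of_nonneg psiScale_nonneg]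
  refine mul_le_mul_of_nonneg_left ?_ psiScale_nonneg
  simp only [star_prodVec_dotProduct_actVec_eq_mul hφ χ A]
  apply norm_sum_mul_le_of_sum_norm_sq_le
  · simpa [hstabA] using
      sum_norm_sq_star_prodVec_piecewise_dotProduct_actVecOn_le hO hφ horth hχ A
  · simpa [hstabB] using
      sum_norm_sq_star_prodVec_piecewise_dotProduct_actVecOn_le hO hφ horth hχ Aᶜ

theorem star_prodVec_dotProduct_Psi_self (hO : IsLocalRep O)
    (hφ : ∀ k, star (φ k) ⬝ᵥ φ k = 1) (horth : OrthCond O φ) :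
    star (prodVec φ) ⬝ᵥ Psi O φ = psiScale O φ * Nat.card (globalStab O φ) := by
  have hterm : ∀ t, star (prodVec φ) ⬝ᵥ actVec O φ t = if t ∈ globalStab O φ then 1 else 0 := by
    intro t
    rw [← actVecOn_one hO univ, ← actVecOn_univ,
      star_actVecOn_dotProduct_actVecOn_eq_ite hO hφ horth]
    exact if_congr (by rw [actVecOn_one hO, actVecOn_univ]; exact eq_comm) rfl rfl
  simp only [star_dotProduct_Psi, hterm, sum_boole, Nat.card_eq_fintype_card, Fintype.card_subtype]

theorem card_globalStab_pos (hO : IsLocalRep O) : 0 < Nat.card (globalStab O φ) := by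
  have h1 : (1 : Fin n → G) ∈ globalStab O φ := by
    change actVec O φ 1 = prodVec φ
    rw [← actVecOn_univ, actVecOn_one hO]
  have : Nonempty (globalStab O φ) := ⟨⟨1, h1⟩⟩
  exact Nat.card_pos

theorem LMax_Psi (hO : IsLocalRep O) (hφ : ∀ k, ∑ x, ‖φ k x‖ ^ 2 = 1) (horth : OrthCond O φ)
    (A : Finset (Fin m)) (hstabA : localStab O φ A = globalStab O φ)
    (hstabB : localStab O φ Aᶜ = globalStab O φ) :
    LMax (Psi O φ) = psiScale O φ * Nat.card (globalStab O φ) := by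
  have hφ' k := star_dotProduct_self_eq_one (hφ k)
  refine IsGreatest.csSup_eq ⟨⟨prodVec φ, ⟨φ, hφ, fun _ => rfl⟩, ?_⟩, ?_⟩
  · change _ = ‖star (prodVec φ) ⬝ᵥ Psi O φ‖
    rw [star_prodVec_dotProduct_Psi_self hO hφ' horth, norm_mul, Complex.norm_real,
      Complex.norm_natCast, Real.norm_of_nonneg psiScale_nonneg]
  · rintro r ⟨Φ, ⟨χ, hχ, hΦ⟩, rfl⟩
    obtain rfl : Φ = prodVec χ := funext hΦ
    exact norm_star_prodVec_dotProduct_Psi_le hO hφ' horth A hstabA hstabB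
      fun k => star_dotProduct_self_eq_one (hχ k)

end Symmetrized

theorem general_exact_value_general
    {G : Type} [Group G] [Fintype G] {n m : ℕ}
    {ι : Fin m → Type} [∀ k, Fintype (ι k)] [∀ k, DecidableEq (ι k)]
    (O : (k : Fin m) → (Fin n → G) → Matrix (ι k) (ι k) ℂ) (hO : IsLocalRep O)
    (φ : (k : Fin m) → ι k → ℂ) (hφ : ∀ k, ∑ x : ι k, ‖φ k x‖ ^ 2 = 1)
    (horth : OrthCond O φ)
    (A : Finset (Fin m))
    (hstabA : localStab O φ A = globalStab O φ)
    (hstabB : localStab O φ Aᶜ = globalStab O φ) :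
    EG (Psi O φ) =
      (n : ℝ) * Real.logb 2 (Fintype.card G) -
        Real.logb 2 (Nat.card (globalStab O φ) : ℝ) := by
  have hS : (0 : ℝ) < Nat.card (globalStab O φ) := by exact_mod_cast card_globalStab_pos hO
  have hG : (0 : ℝ) < (Fintype.card G : ℝ) ^ n := by positivity
  rw [EG, LMax_Psi hO hφ horth A hstabA hstabB, psiScale_mul_card_sq,
    Real.logb_div hS.ne' hG.ne', Real.logb_pow]
  ring

/-- Exact value theorem: if the parties split into two nonempty sets
A and B = Aᶜ with 𝒢_Φ(A) = 𝒢_Φ(B) = 𝒢_Φ, then E_G(Ψ) = n·log₂|G| − log₂|𝒢_Φ|. -/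
theorem general_exact_value
    {G : Type} [Group G] [Fintype G] {n m : ℕ}
    {ι : Fin m → Type} [∀ k, Fintype (ι k)] [∀ k, DecidableEq (ι k)]
    (O : (k : Fin m) → (Fin n → G) → Matrix (ι k) (ι k) ℂ) (hO : IsLocalRep O)
    (φ : (k : Fin m) → ι k → ℂ) (hφ : ∀ k, ∑ x : ι k, ‖φ k x‖ ^ 2 = 1)
    (horth : OrthCond O φ)
    (A : Finset (Fin m)) (hA : A.Nonempty) (hB : Aᶜ.Nonempty)
    (hstabA : localStab O φ A = globalStab O φ)
    (hstabB : localStab O φ Aᶜ = globalStab O φ) :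
    EG (Psi O φ) =
      (n : ℝ) * Real.logb 2 (Fintype.card G) -
        Real.logb 2 (Nat.card (globalStab O φ) : ℝ) :=
  general_exact_value_general O hO φ hφ horth A hstabA hstabB

end GenForm
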